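/- If a* is an optimal coefficient vector for channel h with hᵀa* ≥ 0, and h(i) = h(j) for indices i < j, then |a*(i) − a*(j)| ≤ 1. -/
import Mathlib


/-- The objective `f(a) = ‖a‖² − P(hᵀa)²/(1+P‖h‖²)` for an integer vector `a`. -/
noncomputable def cfObj {L : ℕ} (P : ℝ) (h : Fin L → ℝ) (a : Fin L → ℤ) : ℝ :=
  (∑ ℓ, (a ℓ : ℝ) ^ 2) - P * (∑ ℓ, h ℓ * (a ℓ : ℝ)) ^ 2 / (1 + P * ∑ ℓ, h ℓ ^ 2)

set_option maxHeartbeats 2000000 in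
lemma cf_key {L : ℕ} (P : ℝ) (hP : 0 < P) (h : Fin L → ℝ)
    (a : Fin L → ℤ) (hip : 0 ≤ ∑ ℓ, h ℓ * (a ℓ : ℝ))
    (hopt : ∀ b : Fin L → ℤ, b ≠ 0 → (0 ≤ ∑ ℓ, h ℓ * (b ℓ : ℝ)) →
      cfObj P h a ≤ cfObj P h b)
    (i j : Fin L) (hij : i ≠ j) (hh : h i = h j) (hge : 2 ≤ a i - a j) : False := by
  have hden : 0 < 1 + P * ∑ ℓ, h ℓ ^ 2 := by
    have : (0:ℝ) ≤ ∑ ℓ, h ℓ ^ 2 := Finset.sum_nonneg fun ℓ _ => sq_nonneg _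
    nlinarith
  set b : Fin L → ℤ := fun ℓ => a ℓ + (if ℓ = i then -1 else 0) + (if ℓ = j then 1 else 0)
    with hbdef
  have hbi : b i = a i - 1 := by simp [hbdef, hij]; ring
  have hbj : b j = a j + 1 := by simp [hbdef, Ne.symm hij]
  -- inner product preserved
  have hipb : (∑ ℓ, h ℓ * (b ℓ : ℝ)) = ∑ ℓ, h ℓ * (a ℓ : ℝ) := by
    have : ∀ ℓ, h ℓ * (b ℓ : ℝ) = h ℓ * (a ℓ : ℝ)
        + (if ℓ = i then -h ℓ else 0) + (if ℓ = j then h ℓ else 0) := by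
      intro ℓ
      by_cases h1 : ℓ = i <;> by_cases h2 : ℓ = j <;>
        simp [hbdef, h1, h2] <;> ring_nf <;> simp_all <;> ring
    simp [this, Finset.sum_add_distrib, Finset.sum_ite_eq', hh]
  -- norm squared change
  have hsq : (∑ ℓ, (b ℓ : ℝ) ^ 2) = (∑ ℓ, (a ℓ : ℝ) ^ 2)
      + (2 - 2 * ((a i : ℝ) - (a j : ℝ))) := by
    have : ∀ ℓ, (b ℓ : ℝ) ^ 2 = (a ℓ : ℝ) ^ 2
        + (if ℓ = i then -2 * (a ℓ : ℝ) + 1 else 0)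
        + (if ℓ = j then 2 * (a ℓ : ℝ) + 1 else 0) := by
      intro ℓ
      by_cases h1 : ℓ = i <;> by_cases h2 : ℓ = j <;>
        simp [hbdef, h1, h2] <;> push_cast <;> ring_nf <;> simp_all <;> ring
    simp [this, Finset.sum_add_distrib, Finset.sum_ite_eq']
    ring
  by_cases hb0 : b = 0
  · -- then a is e_i - e_j, cfObj a = 2; compare with ± e_i
    have hai : a i = 1 := by
      have := congrFun hb0 i
      rw [hbi, Pi.zero_apply] at this; omega
    have haj : a j = -1 := by
      have := congrFun hb0 j
      rw [hbj, Pi.zero_apply] at this; omega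
    have haother : ∀ ℓ, ℓ ≠ i → ℓ ≠ j → a ℓ = 0 := by
      intro ℓ h1 h2
      have := congrFun hb0 ℓ
      rw [Pi.zero_apply] at this
      simp [hbdef, h1, h2] at this
      exact this
    have ha_eq : ∀ ℓ, (a ℓ : ℝ) = (if ℓ = i then 1 else 0) + (if ℓ = j then -1 else 0) := by
      intro ℓ
      by_cases h1 : ℓ = i <;> by_cases h2 : ℓ = j <;>
        simp_all [hai, haj, haother]
    have hipa : (∑ ℓ, h ℓ * (a ℓ : ℝ)) = 0 := by
      simp [ha_eq, mul_add, Finset.sum_add_distrib, mul_ite, Finset.sum_ite_eq', hh]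
    have hsqa : (∑ ℓ, (a ℓ : ℝ) ^ 2) = 2 := by
      have : ∀ ℓ, (a ℓ : ℝ) ^ 2 = (if ℓ = i then 1 else 0) + (if ℓ = j then 1 else 0) := by
        intro ℓ
        by_cases h1 : ℓ = i <;> by_cases h2 : ℓ = j <;> simp_all [hai, haj, haother]
      simp [this, Finset.sum_add_distrib, Finset.sum_ite_eq']
      norm_num
    set e : Fin L → ℤ := fun ℓ => if ℓ = i then (if 0 ≤ h i then 1 else -1) else 0 with hedef
    have he0 : e ≠ 0 := by
      intro he
      have := congrFun he i
      simp [hedef] at this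
      by_cases hs : 0 ≤ h i <;> simp [hs] at this
    have hipe : (∑ ℓ, h ℓ * (e ℓ : ℝ)) = |h i| := by
      have hpt : ∀ ℓ, h ℓ * (e ℓ : ℝ) = if ℓ = i then |h i| else 0 := by
        intro ℓ
        by_cases h1 : ℓ = i
        · rw [h1, if_pos rfl]
          by_cases hs : 0 ≤ h i
          · simp [hedef, hs, abs_of_nonneg hs]
          · simp only [hedef, if_pos rfl, if_neg hs]
            rw [abs_of_neg (not_le.mp hs)]
            push_cast
            ring
        · simp [hedef, h1]
      rw [Finset.sum_congr rfl (fun ℓ _ => hpt ℓ), Finset.sum_ite_eq']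
      simp
    have hsqe : (∑ ℓ, (e ℓ : ℝ) ^ 2) = 1 := by
      have hpt : ∀ ℓ, (e ℓ : ℝ) ^ 2 = if ℓ = i then 1 else 0 := by
        intro ℓ
        by_cases h1 : ℓ = i
        · by_cases hs : 0 ≤ h i <;> simp [hedef, h1, hs]
        · simp [hedef, h1]
      rw [Finset.sum_congr rfl (fun ℓ _ => hpt ℓ), Finset.sum_ite_eq']
      simp
    have hle := hopt e he0 (by rw [hipe]; exact abs_nonneg _)
    rw [cfObj, cfObj, hipa, hsqa, hipe, hsqe] at hle
    have h1 : 0 ≤ P * h i ^ 2 / (1 + P * ∑ ℓ, h ℓ ^ 2) := by positivity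
    norm_num at hle
    linarith
  · have hle := hopt b hb0 (by rw [hipb]; exact hip)
    rw [cfObj, cfObj, hipb, hsq] at hle
    have hge' : (2:ℝ) ≤ (a i : ℝ) - (a j : ℝ) := by exact_mod_cast hge
    linarith

theorem optimal_coeff_equal_entries {L : ℕ} (P : ℝ) (hP : 0 < P) (h : Fin L → ℝ)
    (aStar : Fin L → ℤ) (haStar : aStar ≠ 0)
    (hip : 0 ≤ ∑ ℓ, h ℓ * (aStar ℓ : ℝ))
    (hopt : ∀ a : Fin L → ℤ, a ≠ 0 → (0 ≤ ∑ ℓ, h ℓ * (a ℓ : ℝ)) →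
      cfObj P h aStar ≤ cfObj P h a)
    (i j : Fin L) (hij : i < j) (hh : h i = h j) :
    |aStar i - aStar j| ≤ 1 := by
  by_contra hc
  push_neg at hc
  have hne : i ≠ j := ne_of_lt hij
  rcases abs_cases (aStar i - aStar j) with ⟨heq, _⟩ | ⟨heq, _⟩
  · exact cf_key P hP h aStar hip hopt i j hne hh (by omega)
  · exact cf_key P hP h aStar hip hopt j i hne.symm hh.symm (by omega)
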